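/- arXiv:2505.04124 — 2 statements merged into one kernel-verified Lean document; each statement's English description precedes it below -/
import Mathlib

section
/- Every framed surface (x,n,s): U → ℝ³ × Δ is an (n,n̄)-Bertrand framed surface: for any non-zero constant λ, the triple (x + λn, n, s) is again a framed surface whose moving frame normal coincides with n. Moreover, its basic invariants are given by ā_i = a_i + λe_i, b̄_i = b_i + λf_i, ē_i = e_i, f̄_i = f_i, ḡ_i = g_i for i = 1,2. -/
open Matrix Real intervalIntegral

set_option linter.unusedVariables false

noncomputable section

abbrev V3 : Type := Fin 3 → ℝ

/-- partial derivative in the `u` direction -/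
def pu {E : Type} [NormedAddCommGroup E] [NormedSpace ℝ E] (f : ℝ × ℝ → E) (p : ℝ × ℝ) : E :=
  fderiv ℝ f p (1, 0)

/-- partial derivative in the `v` direction -/
def pv {E : Type} [NormedAddCommGroup E] [NormedSpace ℝ E] (f : ℝ × ℝ → E) (p : ℝ × ℝ) : E :=
  fderiv ℝ f p (0, 1)

/-- the third frame vector t = n × s -/
def T3 (n s : ℝ × ℝ → V3) : ℝ × ℝ → V3 := fun p => crossProduct (n p) (s p)

/-- A framed surface: x_u · n = x_v · n = 0, with (n,s) ∈ Δ. -/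
structure IsFramedSurface (U : Set (ℝ × ℝ)) (x n s : ℝ × ℝ → V3) : Prop where
  smooth_x : ContDiffOn ℝ (⊤ : ℕ∞) x U
  smooth_n : ContDiffOn ℝ (⊤ : ℕ∞) n U
  smooth_s : ContDiffOn ℝ (⊤ : ℕ∞) s U
  unit_n : ∀ p ∈ U, n p ⬝ᵥ n p = 1
  unit_s : ∀ p ∈ U, s p ⬝ᵥ s p = 1
  orth_ns : ∀ p ∈ U, n p ⬝ᵥ s p = 0
  tang_u : ∀ p ∈ U, pu x p ⬝ᵥ n p = 0
  tang_v : ∀ p ∈ U, pv x p ⬝ᵥ n p = 0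

/-- basic invariants -/
def iA1 (x n s : ℝ × ℝ → V3) (p : ℝ × ℝ) : ℝ := pu x p ⬝ᵥ s p
def iA2 (x n s : ℝ × ℝ → V3) (p : ℝ × ℝ) : ℝ := pv x p ⬝ᵥ s p
def iB1 (x n s : ℝ × ℝ → V3) (p : ℝ × ℝ) : ℝ := pu x p ⬝ᵥ T3 n s p
def iB2 (x n s : ℝ × ℝ → V3) (p : ℝ × ℝ) : ℝ := pv x p ⬝ᵥ T3 n s p
def iE1 (x n s : ℝ × ℝ → V3) (p : ℝ × ℝ) : ℝ := pu n p ⬝ᵥ s p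
def iE2 (x n s : ℝ × ℝ → V3) (p : ℝ × ℝ) : ℝ := pv n p ⬝ᵥ s p
def iF1 (x n s : ℝ × ℝ → V3) (p : ℝ × ℝ) : ℝ := pu n p ⬝ᵥ T3 n s p
def iF2 (x n s : ℝ × ℝ → V3) (p : ℝ × ℝ) : ℝ := pv n p ⬝ᵥ T3 n s p
def iG1 (x n s : ℝ × ℝ → V3) (p : ℝ × ℝ) : ℝ := pu s p ⬝ᵥ T3 n s p
def iG2 (x n s : ℝ × ℝ → V3) (p : ℝ × ℝ) : ℝ := pv s p ⬝ᵥ T3 n s p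

/-- λ ≢ 0 : the set where λ ≠ 0 is dense in U. -/
def DenseNonzero (U : Set (ℝ × ℝ)) (lam : ℝ × ℝ → ℝ) : Prop :=
  ∀ p ∈ U, p ∈ closure {q ∈ U | lam q ≠ 0}

/-- (n, n̄)-Bertrand framed surface -/
def BertrandNN (U : Set (ℝ × ℝ)) (x n s : ℝ × ℝ → V3) : Prop :=
  ∃ (xb nb sb : ℝ × ℝ → V3) (lam : ℝ × ℝ → ℝ), IsFramedSurface U xb nb sb ∧
    ContDiffOn ℝ (⊤ : ℕ∞) lam U ∧ DenseNonzero U lam ∧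
    ∀ p ∈ U, xb p = x p + lam p • n p ∧ nb p = n p

/-- (n, s̄)-Bertrand framed surface -/
def BertrandNS (U : Set (ℝ × ℝ)) (x n s : ℝ × ℝ → V3) : Prop :=
  ∃ (xb nb sb : ℝ × ℝ → V3) (lam : ℝ × ℝ → ℝ), IsFramedSurface U xb nb sb ∧
    ContDiffOn ℝ (⊤ : ℕ∞) lam U ∧ DenseNonzero U lam ∧
    ∀ p ∈ U, xb p = x p + lam p • n p ∧ sb p = n p

/-- (n, t̄)-Bertrand framed surface -/
def BertrandNT (U : Set (ℝ × ℝ)) (x n s : ℝ × ℝ → V3) : Prop :=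
  ∃ (xb nb sb : ℝ × ℝ → V3) (lam : ℝ × ℝ → ℝ), IsFramedSurface U xb nb sb ∧
    ContDiffOn ℝ (⊤ : ℕ∞) lam U ∧ DenseNonzero U lam ∧
    ∀ p ∈ U, xb p = x p + lam p • n p ∧ T3 nb sb p = n p

/-- (s, n̄)-Bertrand framed surface -/
def BertrandSN (U : Set (ℝ × ℝ)) (x n s : ℝ × ℝ → V3) : Prop :=
  ∃ (xb nb sb : ℝ × ℝ → V3) (lam : ℝ × ℝ → ℝ), IsFramedSurface U xb nb sb ∧
    ContDiffOn ℝ (⊤ : ℕ∞) lam U ∧ DenseNonzero U lam ∧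
    ∀ p ∈ U, xb p = x p + lam p • s p ∧ nb p = s p

/-- (s, s̄)-Bertrand framed surface -/
def BertrandSS (U : Set (ℝ × ℝ)) (x n s : ℝ × ℝ → V3) : Prop :=
  ∃ (xb nb sb : ℝ × ℝ → V3) (lam : ℝ × ℝ → ℝ), IsFramedSurface U xb nb sb ∧
    ContDiffOn ℝ (⊤ : ℕ∞) lam U ∧ DenseNonzero U lam ∧
    ∀ p ∈ U, xb p = x p + lam p • s p ∧ sb p = s p

/-- (s, t̄)-Bertrand framed surface -/
def BertrandST (U : Set (ℝ × ℝ)) (x n s : ℝ × ℝ → V3) : Prop :=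
  ∃ (xb nb sb : ℝ × ℝ → V3) (lam : ℝ × ℝ → ℝ), IsFramedSurface U xb nb sb ∧
    ContDiffOn ℝ (⊤ : ℕ∞) lam U ∧ DenseNonzero U lam ∧
    ∀ p ∈ U, xb p = x p + lam p • s p ∧ T3 nb sb p = s p

/-- (t, n̄)-Bertrand framed surface -/
def BertrandTN (U : Set (ℝ × ℝ)) (x n s : ℝ × ℝ → V3) : Prop :=
  ∃ (xb nb sb : ℝ × ℝ → V3) (lam : ℝ × ℝ → ℝ), IsFramedSurface U xb nb sb ∧
    ContDiffOn ℝ (⊤ : ℕ∞) lam U ∧ DenseNonzero U lam ∧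
    ∀ p ∈ U, xb p = x p + lam p • T3 n s p ∧ nb p = T3 n s p
lemma pu_add_smul (x n : ℝ × ℝ → V3) (lam : ℝ) (p : ℝ × ℝ)
    (hx : DifferentiableAt ℝ x p) (hn : DifferentiableAt ℝ n p) :
    pu (fun q => x q + lam • n q) p = pu x p + lam • pu n p := by
  unfold pu
  rw [fderiv_fun_add (g := fun q => lam • n q) hx (hn.const_smul lam), fderiv_fun_const_smul hn]
  simp

lemma pv_add_smul (x n : ℝ × ℝ → V3) (lam : ℝ) (p : ℝ × ℝ)
    (hx : DifferentiableAt ℝ x p) (hn : DifferentiableAt ℝ n p) :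
    pv (fun q => x q + lam • n q) p = pv x p + lam • pv n p := by
  unfold pv
  rw [fderiv_fun_add (g := fun q => lam • n q) hx (hn.const_smul lam), fderiv_fun_const_smul hn]
  simp

lemma hasFDerivAt_dot (f g : ℝ × ℝ → V3) (p : ℝ × ℝ)
    (hf : DifferentiableAt ℝ f p) (hg : DifferentiableAt ℝ g p) :
    HasFDerivAt (fun q => f q ⬝ᵥ g q)
      (∑ i : Fin 3, (f p i • (ContinuousLinearMap.proj i).comp (fderiv ℝ g p)
        + g p i • (ContinuousLinearMap.proj i).comp (fderiv ℝ f p))) p := by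
  have hfi : ∀ i : Fin 3, HasFDerivAt (fun q => f q i)
      ((ContinuousLinearMap.proj (R := ℝ) (φ := fun _ : Fin 3 => ℝ) i).comp (fderiv ℝ f p)) p :=
    fun i => (ContinuousLinearMap.proj (R := ℝ) (φ := fun _ : Fin 3 => ℝ) i).hasFDerivAt.comp p hf.hasFDerivAt
  have hgi : ∀ i : Fin 3, HasFDerivAt (fun q => g q i)
      ((ContinuousLinearMap.proj (R := ℝ) (φ := fun _ : Fin 3 => ℝ) i).comp (fderiv ℝ g p)) p :=
    fun i => (ContinuousLinearMap.proj (R := ℝ) (φ := fun _ : Fin 3 => ℝ) i).hasFDerivAt.comp p hg.hasFDerivAt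
  have := HasFDerivAt.fun_sum (fun i (_ : i ∈ Finset.univ) => (hfi i).mul (hgi i))
  simpa [dotProduct] using this

lemma pu_dot (f g : ℝ × ℝ → V3) (p : ℝ × ℝ)
    (hf : DifferentiableAt ℝ f p) (hg : DifferentiableAt ℝ g p) :
    pu (fun q => f q ⬝ᵥ g q) p = pu f p ⬝ᵥ g p + f p ⬝ᵥ pu g p := by
  have h := (hasFDerivAt_dot f g p hf hg).fderiv
  unfold pu
  rw [h]
  simp [dotProduct, Finset.sum_add_distrib, mul_comm]
  exact add_comm _ _

lemma pu_dot_self_zero {U : Set (ℝ × ℝ)} (hU : IsOpen U) (n : ℝ × ℝ → V3)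
    (p : ℝ × ℝ) (hp : p ∈ U) (h1 : ∀ q ∈ U, n q ⬝ᵥ n q = 1)
    (hn : DifferentiableAt ℝ n p) : pu n p ⬝ᵥ n p = 0 := by
  have heq : (fun q => n q ⬝ᵥ n q) =ᶠ[nhds p] fun _ => (1 : ℝ) :=
    Filter.eventually_of_mem (hU.mem_nhds hp) h1
  have h0 : pu (fun q => n q ⬝ᵥ n q) p = 0 := by
    unfold pu
    rw [heq.fderiv_eq, fderiv_fun_const]
    simp
  rw [pu_dot n n p hn hn] at h0
  have : n p ⬝ᵥ pu n p = pu n p ⬝ᵥ n p := dotProduct_comm _ _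
  rw [this] at h0
  linarith

lemma pv_dot (f g : ℝ × ℝ → V3) (p : ℝ × ℝ)
    (hf : DifferentiableAt ℝ f p) (hg : DifferentiableAt ℝ g p) :
    pv (fun q => f q ⬝ᵥ g q) p = pv f p ⬝ᵥ g p + f p ⬝ᵥ pv g p := by
  have h := (hasFDerivAt_dot f g p hf hg).fderiv
  unfold pv
  rw [h]
  simp [dotProduct, Finset.sum_add_distrib, mul_comm]
  exact add_comm _ _

lemma pv_dot_self_zero {U : Set (ℝ × ℝ)} (hU : IsOpen U) (n : ℝ × ℝ → V3)
    (p : ℝ × ℝ) (hp : p ∈ U) (h1 : ∀ q ∈ U, n q ⬝ᵥ n q = 1)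
    (hn : DifferentiableAt ℝ n p) : pv n p ⬝ᵥ n p = 0 := by
  have heq : (fun q => n q ⬝ᵥ n q) =ᶠ[nhds p] fun _ => (1 : ℝ) :=
    Filter.eventually_of_mem (hU.mem_nhds hp) h1
  have h0 : pv (fun q => n q ⬝ᵥ n q) p = 0 := by
    unfold pv
    rw [heq.fderiv_eq, fderiv_fun_const]
    simp
  rw [pv_dot n n p hn hn] at h0
  have : n p ⬝ᵥ pv n p = pv n p ⬝ᵥ n p := dotProduct_comm _ _
  rw [this] at h0
  linarith

/-- every framed surface is (n,n̄)-Bertrand: for any non-zero constant λ,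
(x + λn, n, s) is a framed surface with n̄ = n and the stated invariants. -/
theorem nn_Bertrand
    (U : Set (ℝ × ℝ)) (hU : IsOpen U) (x n s : ℝ × ℝ → V3)
    (h : IsFramedSurface U x n s) (lam : ℝ) (hlam : lam ≠ 0)
    (xb : ℝ × ℝ → V3) (hxb : xb = fun p => x p + lam • n p) :
    IsFramedSurface U xb n s ∧
    ∀ p ∈ U,
      iA1 xb n s p = iA1 x n s p + lam * iE1 x n s p ∧
      iA2 xb n s p = iA2 x n s p + lam * iE2 x n s p ∧
      iB1 xb n s p = iB1 x n s p + lam * iF1 x n s p ∧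
      iB2 xb n s p = iB2 x n s p + lam * iF2 x n s p ∧
      iE1 xb n s p = iE1 x n s p ∧ iE2 xb n s p = iE2 x n s p ∧
      iF1 xb n s p = iF1 x n s p ∧ iF2 xb n s p = iF2 x n s p ∧
      iG1 xb n s p = iG1 x n s p ∧ iG2 xb n s p = iG2 x n s p := by
  have hxd : ∀ p ∈ U, DifferentiableAt ℝ x p := fun p hp =>
    (h.smooth_x.contDiffAt (hU.mem_nhds hp)).differentiableAt (by simp)
  have hnd : ∀ p ∈ U, DifferentiableAt ℝ n p := fun p hp =>
    (h.smooth_n.contDiffAt (hU.mem_nhds hp)).differentiableAt (by simp)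
  have hpu : ∀ p ∈ U, pu xb p = pu x p + lam • pu n p := by
    intro p hp
    rw [hxb]
    exact pu_add_smul x n lam p (hxd p hp) (hnd p hp)
  have hpv : ∀ p ∈ U, pv xb p = pv x p + lam • pv n p := by
    intro p hp
    rw [hxb]
    exact pv_add_smul x n lam p (hxd p hp) (hnd p hp)
  have hnnu : ∀ p ∈ U, pu n p ⬝ᵥ n p = 0 := fun p hp =>
    pu_dot_self_zero hU n p hp h.unit_n (hnd p hp)
  have hnnv : ∀ p ∈ U, pv n p ⬝ᵥ n p = 0 := fun p hp =>
    pv_dot_self_zero hU n p hp h.unit_n (hnd p hp)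
  constructor
  · exact
      { smooth_x := by
          rw [hxb]
          exact h.smooth_x.add (h.smooth_n.const_smul lam)
        smooth_n := h.smooth_n
        smooth_s := h.smooth_s
        unit_n := h.unit_n
        unit_s := h.unit_s
        orth_ns := h.orth_ns
        tang_u := by
          intro p hp
          rw [hpu p hp, add_dotProduct, smul_dotProduct, h.tang_u p hp, hnnu p hp]
          simp
        tang_v := by
          intro p hp
          rw [hpv p hp, add_dotProduct, smul_dotProduct, h.tang_v p hp, hnnv p hp]
          simp }
  · intro p hp
    refine ⟨?_, ?_, ?_, ?_, rfl, rfl, rfl, rfl, rfl, rfl⟩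
    · simp only [iA1, iE1, hpu p hp, add_dotProduct, smul_dotProduct, smul_eq_mul]
    · simp only [iA2, iE2, hpv p hp, add_dotProduct, smul_dotProduct, smul_eq_mul]
    · simp only [iB1, iF1, hpu p hp, add_dotProduct, smul_dotProduct, smul_eq_mul]
    · simp only [iB2, iF2, hpv p hp, add_dotProduct, smul_dotProduct, smul_eq_mul]
end
end

section
/- Suppose (x,n,s) and (x̄,n̄,s̄) = (x + λs, s, t) are (s,n̄)-mates, where λ_u = −a₁ and λ_v = −a₂. Then the basic invariants of (x̄,n̄,s̄) are: ā₁ = b₁ + λg₁, ā₂ = b₂ + λg₂, b̄_i = −λe_i, ē_i = g_i, f̄_i = −e_i, ḡ_i = −f_i for i = 1,2. -/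
open Matrix Real intervalIntegral

set_option linter.unusedVariables false

noncomputable section

def bilinCLM {W : Type} [NormedAddCommGroup W] [NormedSpace ℝ W] [FiniteDimensional ℝ W]
    (B : V3 →ₗ[ℝ] V3 →ₗ[ℝ] W) : V3 →L[ℝ] V3 →L[ℝ] W :=
  LinearMap.toContinuousLinearMap
    ((LinearMap.toContinuousLinearMap.toLinearMap : (V3 →ₗ[ℝ] W) →ₗ[ℝ] (V3 →L[ℝ] W)).comp B)

theorem fderiv_bilin {W : Type} [NormedAddCommGroup W] [NormedSpace ℝ W] [FiniteDimensional ℝ W]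
    (B : V3 →ₗ[ℝ] V3 →ₗ[ℝ] W) {f g : ℝ × ℝ → V3} {p : ℝ × ℝ}
    (hf : DifferentiableAt ℝ f p) (hg : DifferentiableAt ℝ g p) (w : ℝ × ℝ) :
    fderiv ℝ (fun q => B (f q) (g q)) p w
      = B (fderiv ℝ f p w) (g p) + B (f p) (fderiv ℝ g p w) := by
  have h := (bilinCLM B).fderiv_of_bilinear hf hg
  have h2 : (fun q => B (f q) (g q)) = fun q => bilinCLM B (f q) (g q) := rfl
  rw [h2, h]
  simp [ContinuousLinearMap.precompR, ContinuousLinearMap.precompL, bilinCLM]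
  abel

theorem diff_bilin {W : Type} [NormedAddCommGroup W] [NormedSpace ℝ W] [FiniteDimensional ℝ W]
    (B : V3 →ₗ[ℝ] V3 →ₗ[ℝ] W) {f g : ℝ × ℝ → V3} {p : ℝ × ℝ}
    (hf : DifferentiableAt ℝ f p) (hg : DifferentiableAt ℝ g p) :
    DifferentiableAt ℝ (fun q => B (f q) (g q)) p :=
  ((bilinCLM B).hasFDerivAt_of_bilinear hf.hasFDerivAt hg.hasFDerivAt).differentiableAt

def dotL : V3 →ₗ[ℝ] V3 →ₗ[ℝ] ℝ :=
  LinearMap.mk₂ ℝ (· ⬝ᵥ ·)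
    (fun a b c => add_dotProduct a b c)
    (fun r a b => smul_dotProduct r a b)
    (fun a b c => dotProduct_add a b c)
    (fun r a b => dotProduct_smul r a b)

theorem fderiv_dot {f g : ℝ × ℝ → V3} {p : ℝ × ℝ}
    (hf : DifferentiableAt ℝ f p) (hg : DifferentiableAt ℝ g p) (w : ℝ × ℝ) :
    fderiv ℝ (fun q => f q ⬝ᵥ g q) p w
      = fderiv ℝ f p w ⬝ᵥ g p + f p ⬝ᵥ fderiv ℝ g p w :=
  fderiv_bilin dotL hf hg w

theorem fderiv_cross' {f g : ℝ × ℝ → V3} {p : ℝ × ℝ}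
    (hf : DifferentiableAt ℝ f p) (hg : DifferentiableAt ℝ g p) (w : ℝ × ℝ) :
    fderiv ℝ (fun q => crossProduct (f q) (g q)) p w
      = crossProduct (fderiv ℝ f p w) (g p) + crossProduct (f p) (fderiv ℝ g p w) :=
  fderiv_bilin crossProduct hf hg w

theorem diff_cross' {f g : ℝ × ℝ → V3} {p : ℝ × ℝ}
    (hf : DifferentiableAt ℝ f p) (hg : DifferentiableAt ℝ g p) :
    DifferentiableAt ℝ (fun q => crossProduct (f q) (g q)) p :=
  diff_bilin crossProduct hf hg

theorem cross_triple (a b : V3) (h1 : b ⬝ᵥ b = 1) (h2 : a ⬝ᵥ b = 0) :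
    crossProduct b (crossProduct a b) = a := by
  simp only [dotProduct, Fin.sum_univ_three] at h1 h2
  ext i
  fin_cases i <;> simp [crossProduct] <;> ring_nf
  · linear_combination a 0 * h1 - b 0 * h2
  · linear_combination a 1 * h1 - b 1 * h2
  · linear_combination a 2 * h1 - b 2 * h2


/-- basic invariants of the (s,n̄)-mate (x + λs, s, t). -/
theorem sn_mate_invariants
    (U : Set (ℝ × ℝ)) (hU : IsOpen U) (x n s : ℝ × ℝ → V3)
    (h : IsFramedSurface U x n s) (lam : ℝ × ℝ → ℝ)
    (hlam : ContDiffOn ℝ (⊤ : ℕ∞) lam U)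
    (hlu : ∀ p ∈ U, pu lam p = -iA1 x n s p)
    (hlv : ∀ p ∈ U, pv lam p = -iA2 x n s p)
    (xb nb sb : ℝ × ℝ → V3)
    (hxb : xb = fun p => x p + lam p • s p) (hnb : nb = s) (hsb : sb = T3 n s)
    (hb : IsFramedSurface U xb nb sb) :
    ∀ p ∈ U,
      iA1 xb nb sb p = iB1 x n s p + lam p * iG1 x n s p ∧
      iA2 xb nb sb p = iB2 x n s p + lam p * iG2 x n s p ∧
      iB1 xb nb sb p = -(lam p) * iE1 x n s p ∧
      iB2 xb nb sb p = -(lam p) * iE2 x n s p ∧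
      iE1 xb nb sb p = iG1 x n s p ∧
      iE2 xb nb sb p = iG2 x n s p ∧
      iF1 xb nb sb p = -iE1 x n s p ∧
      iF2 xb nb sb p = -iE2 x n s p ∧
      iG1 xb nb sb p = -iF1 x n s p ∧
      iG2 xb nb sb p = -iF2 x n s p := by
  intro p hp
  have hmem : U ∈ nhds p := hU.mem_nhds hp
  have dx : DifferentiableAt ℝ x p :=
    (h.smooth_x.differentiableOn (by simp)).differentiableAt hmem
  have dn : DifferentiableAt ℝ n p :=
    (h.smooth_n.differentiableOn (by simp)).differentiableAt hmem
  have ds : DifferentiableAt ℝ s p :=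
    (h.smooth_s.differentiableOn (by simp)).differentiableAt hmem
  have dlam : DifferentiableAt ℝ lam p :=
    (hlam.differentiableOn (by simp)).differentiableAt hmem
  have dt : DifferentiableAt ℝ (T3 n s) p := diff_cross' dn ds
  subst hxb hsb
  rw [hnb]
  -- t̄ = s × (n × s) = n
  have htns : T3 s (T3 n s) p = n p :=
    cross_triple (n p) (s p) (h.unit_s p hp) (h.orth_ns p hp)
  -- derivative of n·s = 0 on U
  have hdns : fderiv ℝ (fun q => n q ⬝ᵥ s q) p = 0 := by
    have he : (fun q => n q ⬝ᵥ s q) =ᶠ[nhds p] fun _ => (0 : ℝ) :=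
      Filter.eventuallyEq_of_mem hmem h.orth_ns
    rw [he.fderiv_eq]; simp
  have E1 : ∀ w, fderiv ℝ n p w ⬝ᵥ s p + n p ⬝ᵥ fderiv ℝ s p w = 0 := by
    intro w
    have e := fderiv_dot dn ds w
    rw [hdns] at e
    simpa using e.symm
  -- s_w · n = - n_w · s
  have Esn : ∀ w, fderiv ℝ s p w ⬝ᵥ n p = -(fderiv ℝ n p w ⬝ᵥ s p) := by
    intro w
    have := E1 w
    rw [dotProduct_comm]
    linarith [this]
  -- derivative of t·n = 0 (identically)
  have htn0 : (fun q => T3 n s q ⬝ᵥ n q) = fun _ => (0 : ℝ) := by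
    funext q
    rw [dotProduct_comm]
    exact dot_self_cross (n q) (s q)
  have E2 : ∀ w, fderiv ℝ (T3 n s) p w ⬝ᵥ n p + T3 n s p ⬝ᵥ fderiv ℝ n p w = 0 := by
    intro w
    have e := fderiv_dot dt dn w
    rw [htn0] at e
    simpa using e.symm
  -- derivative of xb
  have hxbw : ∀ w, fderiv ℝ (fun q => x q + lam q • s q) p w
      = fderiv ℝ x p w + fderiv ℝ lam p w • s p + lam p • fderiv ℝ s p w := by
    intro w
    rw [fderiv_fun_add (g := fun q => lam q • s q) dx (dlam.smul ds), fderiv_fun_smul dlam ds]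
    simp
    abel
  -- pointwise orthogonality facts
  have hst : s p ⬝ᵥ T3 n s p = 0 := dot_cross_self (n p) (s p)
  have hsn : s p ⬝ᵥ n p = 0 := by rw [dotProduct_comm]; exact h.orth_ns p hp
  have hA : ∀ w, fderiv ℝ (fun q => x q + lam q • s q) p w ⬝ᵥ T3 n s p
      = fderiv ℝ x p w ⬝ᵥ T3 n s p + lam p * (fderiv ℝ s p w ⬝ᵥ T3 n s p) := by
    intro w
    rw [hxbw w, add_dotProduct, add_dotProduct, smul_dotProduct, smul_dotProduct, hst]
    simp [smul_eq_mul]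
    try ring
  have hB : ∀ w, fderiv ℝ x p w ⬝ᵥ n p = 0 →
      fderiv ℝ (fun q => x q + lam q • s q) p w ⬝ᵥ n p
      = -(lam p) * (fderiv ℝ n p w ⬝ᵥ s p) := by
    intro w hx0
    rw [hxbw w, add_dotProduct, add_dotProduct, smul_dotProduct, smul_dotProduct, hx0, hsn,
      Esn w]
    simp [smul_eq_mul]
    try ring
  have hG : ∀ w, fderiv ℝ (T3 n s) p w ⬝ᵥ n p = -(fderiv ℝ n p w ⬝ᵥ T3 n s p) := by
    intro w
    have := E2 w
    rw [dotProduct_comm (T3 n s p)] at this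
    linarith
  refine ⟨?_, ?_, ?_, ?_, ?_, ?_, ?_, ?_, ?_, ?_⟩
  · show _ ⬝ᵥ T3 n s p = _
    exact hA (1, 0)
  · exact hA (0, 1)
  · show _ ⬝ᵥ T3 s (T3 n s) p = _
    rw [htns]; exact hB (1, 0) (h.tang_u p hp)
  · show _ ⬝ᵥ T3 s (T3 n s) p = _
    rw [htns]; exact hB (0, 1) (h.tang_v p hp)
  · rfl
  · rfl
  · show pu s p ⬝ᵥ T3 s (T3 n s) p = _
    rw [htns]; exact Esn (1, 0)
  · show pv s p ⬝ᵥ T3 s (T3 n s) p = _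
    rw [htns]; exact Esn (0, 1)
  · show pu (T3 n s) p ⬝ᵥ T3 s (T3 n s) p = _
    rw [htns]; exact hG (1, 0)
  · show pv (T3 n s) p ⬝ᵥ T3 s (T3 n s) p = _
    rw [htns]; exact hG (0, 1)
end
end
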